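/- Let Π be a subgroup of ℝ × ℤ with projections E : Π → ℝ and μ : Π → ℤ. The map sending Σ c_g [g] to Σ c_g e^{μ(g)/2} T^{E(g)} is an injective ring homomorphism from the Novikov ring Λ(Π) (elements supported so that {g : c_g ≠ 0, E(g) ≤ C} is finite for all C) into the universal Novikov ring Λ_nov over ℚ. -/

import Mathlib

open scoped BigOperators

/-- Growth condition defining elements of the universal Novikov ring `Λ_nov` over `ℚ`. -/
def NovCond (f : ℝ × ℤ → ℚ) : Prop :=
  ∀ C : ℝ, {x : ℝ × ℤ | f x ≠ 0 ∧ x.1 ≤ C}.Finite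

/-- Formal multiplication of Novikov series. -/
noncomputable def novMul (f g : ℝ × ℤ → ℚ) : ℝ × ℤ → ℚ :=
  fun x => ∑ᶠ p : (ℝ × ℤ) × (ℝ × ℤ), if p.1 + p.2 = x then f p.1 * g p.2 else 0

/-- The multiplicative unit of `Λ_nov`. -/
noncomputable def novOne : ℝ × ℤ → ℚ :=
  fun x => if x = (0, 0) then 1 else 0

/-- Finiteness condition defining the Novikov ring `Λ(P)` of a subgroup `P ⊆ ℝ × ℤ`. -/
def PiAdmissible (P : AddSubgroup (ℝ × ℤ)) (c : P → ℚ) : Prop :=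
  ∀ C : ℝ, {g : P | c g ≠ 0 ∧ (g : ℝ × ℤ).1 ≤ C}.Finite

/-- The convolution product on `Λ(P)`. -/
noncomputable def piConv (P : AddSubgroup (ℝ × ℤ)) (c c' : P → ℚ) : P → ℚ :=
  fun x => ∑ᶠ p : P × P, if p.1 + p.2 = x then c p.1 * c' p.2 else 0

open Classical in
/-- The map `Σ c_g [g] ↦ Σ c_g e^{μ(g)/2} T^{E(g)}` induced by `[g] ↦ e^{μ(g)/2} T^{E(g)}`,
where `E, μ` are the two projections of `ℝ × ℤ`. -/
noncomputable def piEmbed (P : AddSubgroup (ℝ × ℤ)) (c : P → ℚ) : ℝ × ℤ → ℚ :=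
  fun x => if h : x ∈ P then c ⟨x, h⟩ else 0

/-!
`piEmbed P` is extension by zero along the inclusion `P ↪ ℝ × ℤ`, which makes injectivity, the
growth condition and additivity immediate. A term of the formal product of two extended series
vanishes unless both exponents lie in `P`, so reindexing that finite sum along
`P × P ↪ (ℝ × ℤ) × (ℝ × ℤ)` turns it into the convolution of `Λ(P)`; at exponents outside `P`
it vanishes because `P` is closed under addition.
-/

open Function Set

theorem finsum_comp_of_support_subset_range {α β M : Type*} [AddCommMonoid M] {f : α → M}
    {g : β → α} (hg : Injective g) (hf : support f ⊆ range g) :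
    ∑ᶠ b, f (g b) = ∑ᶠ a, f a := by
  rw [← finsum_mem_range hg, ← finsum_mem_univ f]
  exact finsum_mem_inter_support_eq f _ _ (by rw [univ_inter, inter_eq_right.mpr hf])

namespace piEmbed

variable {P : AddSubgroup (ℝ × ℤ)}

@[simp]
theorem apply_coe (c : P → ℚ) (g : P) : piEmbed P c g = c g := by
  simp [piEmbed]

theorem apply_of_notMem (c : P → ℚ) {x : ℝ × ℤ} (hx : x ∉ P) : piEmbed P c x = 0 := by
  simp [piEmbed, hx]

theorem mem_of_ne_zero {c : P → ℚ} {x : ℝ × ℤ} (hx : piEmbed P c x ≠ 0) : x ∈ P :=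
  not_imp_comm.mp (apply_of_notMem c) hx

theorem injective : Injective (piEmbed P) := fun c c' h =>
  funext fun g => by simpa using congrFun h g

theorem novCond {c : P → ℚ} (hc : PiAdmissible P c) : NovCond (piEmbed P c) := by
  intro C
  refine ((hc C).image Subtype.val).subset ?_
  rintro x ⟨hx, hxC⟩
  have hxP := mem_of_ne_zero hx
  exact ⟨⟨x, hxP⟩, ⟨by rwa [← apply_coe c ⟨x, hxP⟩], hxC⟩, rfl⟩

theorem single_zero : piEmbed P (fun g => if g = 0 then 1 else 0) = novOne := by
  funext x
  by_cases hx : x ∈ P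
  · simp [piEmbed, novOne, hx, ← Subtype.coe_inj, Prod.mk_zero_zero]
  · have hx0 : x ≠ (0, 0) := fun h => hx (h ▸ P.zero_mem)
    simp [apply_of_notMem _ hx, novOne, hx0]

theorem add (c c' : P → ℚ) :
    piEmbed P (fun g => c g + c' g) = fun x => piEmbed P c x + piEmbed P c' x := by
  funext x
  by_cases hx : x ∈ P <;> simp [piEmbed, hx]

theorem novMul_apply (c c' : P → ℚ) (x : ℝ × ℤ) :
    novMul (piEmbed P c) (piEmbed P c') x =
      ∑ᶠ q : P × P, if (q.1 : ℝ × ℤ) + q.2 = x then c q.1 * c' q.2 else 0 := by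
  rw [novMul, ← finsum_comp_of_support_subset_range
    (g := Prod.map (Subtype.val : P → _) (Subtype.val : P → _))
    (Subtype.val_injective.prodMap Subtype.val_injective)]
  · simp only [Prod.map_fst, Prod.map_snd, apply_coe]
  rintro ⟨a, b⟩ hab
  obtain ⟨-, hprod⟩ := ite_ne_right_iff.mp hab
  exact ⟨(⟨a, mem_of_ne_zero (left_ne_zero_of_mul hprod)⟩,
    ⟨b, mem_of_ne_zero (right_ne_zero_of_mul hprod)⟩), rfl⟩

theorem piConv (c c' : P → ℚ) :
    piEmbed P (piConv P c c') = novMul (piEmbed P c) (piEmbed P c') := by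
  funext x
  rw [novMul_apply]
  by_cases hx : x ∈ P
  · simp only [piEmbed, hx, dite_true, _root_.piConv, ← Subtype.coe_inj, AddSubgroup.coe_add]
  · rw [apply_of_notMem _ hx]
    refine (finsum_eq_zero_of_forall_eq_zero fun q => if_neg ?_).symm
    rintro rfl
    exact hx (P.add_mem q.1.2 q.2.2)

end piEmbed

/-- The map `Σ c_g [g] ↦ Σ c_g e^{μ(g)/2} T^{E(g)}` is an injective ring homomorphism
from the Novikov ring `Λ(P)` into the universal Novikov ring over `ℚ`:
it is injective, lands in `Λ_nov` (i.e. satisfies the growth condition), sends `1` to `1`,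
and respects addition and (convolution) multiplication. -/
theorem piEmbed_injective_ringHom (P : AddSubgroup (ℝ × ℤ)) :
    Function.Injective (piEmbed P) ∧
    (∀ c : P → ℚ, PiAdmissible P c → NovCond (piEmbed P c)) ∧
    piEmbed P (fun g => if g = 0 then 1 else 0) = novOne ∧
    (∀ c c' : P → ℚ,
      piEmbed P (fun g => c g + c' g) = fun x => piEmbed P c x + piEmbed P c' x) ∧
    (∀ c c' : P → ℚ, PiAdmissible P c → PiAdmissible P c' →
      piEmbed P (piConv P c c') = novMul (piEmbed P c) (piEmbed P c')) :=
  ⟨piEmbed.injective, fun _ => piEmbed.novCond, piEmbed.single_zero, piEmbed.add,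
    fun c c' _ _ => piEmbed.piConv c c'⟩
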